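/- If an operator G is equivariant to translations and rotations (G{I(·−x₀)} = G{I}(·−x₀) and G{I(R₀·)} = G{I}(R₀·)) and is local with radius ρ₀, then G is invariant to local rotations: for any x ∈ ℝ³ and any rotation R centered at x (i.e., the map y ↦ R(y − x) + x), if I' agrees with I ∘ (rotation centered at x) on the ball B(x, ρ₀) then G{I'}(x) = G{I}(x). -/
import Mathlib

open MeasureTheory Matrix Finset
noncomputable section
abbrev E3 := EuclideanSpace ℝ (Fin 3)
abbrev SO3 := Matrix.specialOrthogonalGroup (Fin 3) ℝ
/-- Action of a `3 × 3` matrix on a point of `ℝ³`. -/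
def rotM (A : Matrix (Fin 3) (Fin 3) ℝ) (x : E3) : E3 := (EuclideanSpace.equiv (Fin 3) ℝ).symm (A.mulVec (EuclideanSpace.equiv (Fin 3) ℝ x))
/-- Action of a rotation `R ∈ SO(3)` on a point of `ℝ³`. -/
def rot (R : SO3) (x : E3) : E3 := rotM R.1 x
/-- Action of the inverse rotation `R⁻¹` on a point of `ℝ³`. -/
def rotInv (R : SO3) (x : E3) : E3 := rotM R.1⁻¹ x
/-- Convolution of real-valued functions on `ℝ³`. -/
def conv (f g : E3 → ℝ) (x : E3) : ℝ := ∫ y, f y * g (x - y)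
/-- Convolution of a real image with a complex filter on `ℝ³`. -/
def convC (I : E3 → ℝ) (g : E3 → ℂ) (x : E3) : ℂ := ∫ y, (I y : ℂ) * g (x - y)
/-- An operator that is equivariant to translations and rotations and local with
radius ρ₀ is invariant to local rotations. -/
theorem stmt14 (G : (E3 → ℝ) → (E3 → ℝ)) (ρ₀ : ℝ) (hρ₀ : 0 < ρ₀)
    (htrans : ∀ (I : E3 → ℝ) (x₀ x : E3), G (fun y => I (y - x₀)) x = G I (x - x₀))
    (hrot : ∀ (I : E3 → ℝ) (R₀ : SO3) (x : E3), G (fun y => I (rot R₀ y)) x = G I (rot R₀ x))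
    (hlocal : ∀ (x : E3) (I₁ I₂ : E3 → ℝ),
      (∀ y ∈ Metric.closedBall x ρ₀, I₁ y = I₂ y) → G I₁ x = G I₂ x) :
    ∀ (x : E3) (R : SO3) (I I' : E3 → ℝ),
      (∀ y ∈ Metric.closedBall x ρ₀, I' y = I (rot R (y - x) + x)) →
      G I' x = G I x := by
  intro x R I I' h
  have hrot0 : rot R 0 = 0 := by
    simp [rot, rotM]
  have h1 : G I' x = G (fun y => I (rot R (y - x) + x)) x := hlocal x _ _ h
  have h2 : (fun y : E3 => I (rot R (y - x) + x))
      = (fun y : E3 => (fun z : E3 => (fun w : E3 => I (w - (-x))) (rot R z)) (y - x)) := by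
    funext y; simp [sub_neg_eq_add]
  rw [h1, h2, htrans (fun z : E3 => (fun w : E3 => I (w - (-x))) (rot R z)) x x, sub_self,
    hrot (fun w : E3 => I (w - (-x))) R 0, hrot0, htrans I (-x) 0]
  simp
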